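/- A Boolean function f has characteristic rank at most k if and only if f = g + h for some reflexive Boolean function g (i.e., with characteristic rank 0) and some Boolean function h of degree at most k, all of the same arity. -/

import Mathlib

/-- A Boolean function of arity `n`. -/
abbrev Bf (n : ℕ) := (Fin n → ZMod 2) → ZMod 2

/-- The Zhegalkin coefficient of the monomial `x_S` of `f`, via Möbius inversion. -/
def zCoeff {n : ℕ} (f : Bf n) (S : Finset (Fin n)) : ZMod 2 :=
  ∑ T ∈ S.powerset, f fun i => if i ∈ T then 1 else 0

/-- The set of monomials of the Zhegalkin polynomial of `f`. -/
def monomials {n : ℕ} (f : Bf n) : Finset (Finset (Fin n)) :=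
  Finset.univ.filter fun S => zCoeff f S = 1
/-- The inner negation `f^n(a) = f(ā)`. -/
def innerNeg {n : ℕ} (f : Bf n) : Bf n := fun a => f fun i => a i + 1

/-- The number of monomials of `f` properly containing `S`; the characteristic
`Char(S, f)` is its parity. -/
def charCount {n : ℕ} (f : Bf n) (S : Finset (Fin n)) : ℕ :=
  ((monomials f).filter fun A => S ⊂ A).card

/-- The characteristic rank of `f` is at most `m`: `Char(S, f) = 0` for all
`S` with `|S| ≥ m`. -/
def CharRankLE {n : ℕ} (f : Bf n) (m : ℕ) : Prop :=
  ∀ S : Finset (Fin n), m ≤ S.card → Even (charCount f S)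

/-!
Under inner negation the Zhegalkin coefficients transform as `c_S(f^n) = ∑_{T ⊇ S} c_T(f)`,
so `c_S(f + f^n)` is exactly `Char(S, f)`. Hence `χ(f) ≤ k` says that `d = f + f^n` has
degree `< k`. A reflexive `g` has `g + g^n = 0` and a function of degree `≤ k` has no monomial
strictly above a set of size `≥ k`, which gives one direction. Conversely `h = x₀ d` has
degree `≤ k` and `g = f + h` is reflexive, since `x₀` flips under negation while `d` is
reflexive.
-/

open Finset

namespace ZMod

lemma eq_zero_or_eq_one_of_two (x : ZMod 2) : x = 0 ∨ x = 1 := by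
  revert x; decide

lemma sum_eq_card_filter_eq_one {ι : Type*} (s : Finset ι) (x : ι → ZMod 2) :
    ∑ i ∈ s, x i = #{i ∈ s | x i = 1} := by
  rw [natCast_card_filter]
  refine sum_congr rfl fun i _ => ?_
  rcases eq_zero_or_eq_one_of_two (x i) with h | h <;> simp [h]

lemma natCast_card_Ici_finset {α : Type*} [Fintype α] [DecidableEq α] (A : Finset α) :
    (#(Ici A) : ZMod 2) = if A = univ then 1 else 0 := by
  rw [Ici_eq_Icc, top_eq_univ, card_Icc_finset (subset_univ A)]
  split_ifs with hA
  · simp [hA]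
  · obtain ⟨x, -, hx⟩ := exists_of_ssubset ((subset_univ A).ssubset_of_ne hA)
    obtain ⟨m, hm⟩ :=
      Nat.exists_eq_succ_of_ne_zero (Nat.sub_pos_of_lt (card_lt_univ_of_notMem hx)).ne'
    rw [card_univ, hm, pow_succ, Nat.cast_mul, Nat.cast_two, show (2 : ZMod 2) = 0 from rfl,
      mul_zero]

end ZMod

variable {n : ℕ}

lemma zCoeff_add (f g : Bf n) (S : Finset (Fin n)) :
    zCoeff (f + g) S = zCoeff f S + zCoeff g S :=
  sum_add_distrib

lemma zCoeff_zero (S : Finset (Fin n)) : zCoeff (0 : Bf n) S = 0 :=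
  sum_const_zero

lemma innerNeg_add (f g : Bf n) : innerNeg (f + g) = innerNeg f + innerNeg g := rfl

lemma innerNeg_innerNeg (f : Bf n) : innerNeg (innerNeg f) = f := by
  funext a
  simp only [innerNeg, add_assoc, CharTwo.add_self_eq_zero, add_zero]

theorem zCoeff_innerNeg (f : Bf n) (S : Finset (Fin n)) :
    zCoeff (innerNeg f) S = ∑ T ∈ Ici S, zCoeff f T := by
  set F : Finset (Fin n) → ZMod 2 := fun U => f fun i => if i ∈ U then 1 else 0
  have hneg : ∀ T : Finset (Fin n),
      innerNeg f (fun i => if i ∈ T then 1 else 0) = F Tᶜ := fun T => by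
    simp only [innerNeg, F, mem_compl]
    congr 1
    funext i
    split_ifs <;> decide
  have hcompl : ∀ U : Finset (Fin n), S ∪ Uᶜ = univ ↔ U ⊆ S := fun U => by
    rw [← top_eq_univ, ← sup_eq_union, ← codisjoint_iff, codisjoint_iff_compl_le_left,
      compl_compl]
  calc zCoeff (innerNeg f) S = ∑ T ∈ S.powerset, F Tᶜ := sum_congr rfl fun T _ => hneg T
    _ = ∑ U with S ∪ U = univ, F U := by
      refine sum_nbij' compl compl (fun T hT => ?_) (fun U hU => ?_)
        (fun T _ => compl_compl T) (fun U _ => compl_compl U) (fun T _ => rfl)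
      · simpa [hcompl] using hT
      · simpa [← hcompl, compl_compl] using hU
    _ = ∑ U, if S ∪ U = univ then F U else 0 := sum_filter _ _
    -- `U` is counted `#(Ici (S ∪ U)) = 2 ^ (n - #(S ∪ U))` times, odd iff `S ∪ U = univ`.
    _ = ∑ U, ∑ T ∈ Ici (S ∪ U), F U := by
      simp only [sum_const, nsmul_eq_mul, ZMod.natCast_card_Ici_finset, ite_mul, one_mul,
        zero_mul]
    _ = ∑ T ∈ Ici S, zCoeff f T :=
      sum_comm' fun U T => by simp [union_subset_iff, and_comm]

theorem zCoeff_add_innerNeg (f : Bf n) (S : Finset (Fin n)) :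
    zCoeff (f + innerNeg f) S = ∑ T ∈ Ioi S, zCoeff f T := by
  rw [zCoeff_add, zCoeff_innerNeg, Ici_eq_cons_Ioi, sum_cons, CharTwo.add_cancel_left]

theorem natCast_charCount (f : Bf n) (S : Finset (Fin n)) :
    (charCount f S : ZMod 2) = zCoeff (f + innerNeg f) S := by
  rw [zCoeff_add_innerNeg, ZMod.sum_eq_card_filter_eq_one, charCount, monomials, filter_filter]
  congr 2
  ext T
  simp [and_comm]

theorem charRankLE_iff_zCoeff_add_innerNeg (f : Bf n) (k : ℕ) :
    CharRankLE f k ↔ ∀ S : Finset (Fin n), k ≤ #S → zCoeff (f + innerNeg f) S = 0 := by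
  simp only [CharRankLE, ← natCast_charCount, ZMod.natCast_eq_zero_iff_even]

lemma forall_mem_monomials_card_le_iff (h : Bf n) (k : ℕ) :
    (∀ S ∈ monomials h, #S ≤ k) ↔ ∀ S : Finset (Fin n), k < #S → zCoeff h S = 0 := by
  refine forall_congr' fun S => ?_
  simp only [monomials, mem_filter, mem_univ, true_and]
  rw [← not_imp_not, not_le]
  refine imp_congr_right fun _ => ?_
  rcases ZMod.eq_zero_or_eq_one_of_two (zCoeff h S) with h0 | h1 <;> simp [*]

lemma zCoeff_var_mul_of_notMem (q : Bf n) {i : Fin n} {S : Finset (Fin n)} (hi : i ∉ S) :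
    zCoeff (fun a => a i * q a) S = 0 :=
  sum_eq_zero fun T hT => by
    simp only [if_neg fun h => hi (mem_powerset.1 hT h), zero_mul]

lemma zCoeff_var_mul_insert (q : Bf n) {i : Fin n} {s : Finset (Fin n)} (hi : i ∉ s) :
    zCoeff (fun a => a i * q a) (insert i s) = zCoeff q (insert i s) + zCoeff q s := by
  simp only [zCoeff, sum_powerset_insert hi, mem_insert_self, if_true, one_mul]
  rw [sum_eq_zero fun t ht => ?_, zero_add, add_comm, CharTwo.add_cancel_left]
  simp only [if_neg fun h => hi (mem_powerset.1 ht h), zero_mul]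

lemma zCoeff_var_mul_eq_zero (q : Bf n) (i : Fin n) {k : ℕ}
    (hq : ∀ S : Finset (Fin n), k ≤ #S → zCoeff q S = 0) {S : Finset (Fin n)} (hS : k < #S) :
    zCoeff (fun a => a i * q a) S = 0 := by
  by_cases hi : i ∈ S
  · rw [← insert_erase hi, zCoeff_var_mul_insert q (notMem_erase i S), insert_erase hi,
      hq S hS.le, hq _ (by rw [card_erase_of_mem hi]; omega), add_zero]
  · exact zCoeff_var_mul_of_notMem q hi

lemma zCoeff_add_innerNeg_eq_zero_of_degree_le {h : Bf n} {k : ℕ}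
    (hh : ∀ T : Finset (Fin n), k < #T → zCoeff h T = 0) {S : Finset (Fin n)} (hS : k ≤ #S) :
    zCoeff (h + innerNeg h) S = 0 := by
  rw [zCoeff_add_innerNeg]
  exact sum_eq_zero fun T hT => hh T (hS.trans_lt (card_lt_card (mem_Ioi.1 hT)))

theorem innerNeg_add_mul_add_innerNeg (f ℓ : Bf n) (hℓ : innerNeg ℓ = ℓ + 1) :
    innerNeg (f + ℓ * (f + innerNeg f)) = f + ℓ * (f + innerNeg f) := by
  change innerNeg f + innerNeg ℓ * (innerNeg f + innerNeg (innerNeg f)) = _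
  rw [hℓ, innerNeg_innerNeg]
  linear_combination innerNeg f * CharTwo.two_eq_zero (R := Bf n)

/-- `χ(f) ≤ k` iff `f = g + h` with `g` reflexive and `deg h ≤ k`. -/
theorem charRankLE_iff_exists_reflexive_add_deg {n : ℕ} (f : Bf n) (k : ℕ) :
    CharRankLE f k ↔
    ∃ g h : Bf n, (∀ a, g (fun i => a i + 1) = g a) ∧
      (∀ S ∈ monomials h, S.card ≤ k) ∧ (∀ a, f a = g a + h a) := by
  simp only [charRankLE_iff_zCoeff_add_innerNeg, forall_mem_monomials_card_le_iff]
  constructor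
  · intro hd
    cases n with
    | zero =>
      exact ⟨f, 0, fun a => congrArg f (Subsingleton.elim _ _), fun S _ => zCoeff_zero S,
        fun a => (add_zero _).symm⟩
    | succ m =>
      set h : Bf (m + 1) := fun a => a 0 * (f + innerNeg f) a
      refine ⟨f + h, h, congrFun (innerNeg_add_mul_add_innerNeg f (fun a => a 0) rfl),
        fun S hS => zCoeff_var_mul_eq_zero _ 0 hd hS,
        fun a => (CharTwo.add_cancel_right (f a) (h a)).symm⟩
  · rintro ⟨g, h, hg, hh, hfgh⟩ S hS
    have hg0 : g + innerNeg g = 0 := by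
      rw [show innerNeg g = g from funext hg, CharTwo.add_self_eq_zero]
    rw [show f = g + h from funext hfgh, innerNeg_add, add_add_add_comm, zCoeff_add, hg0,
      zCoeff_zero, zero_add]
    exact zCoeff_add_innerNeg_eq_zero_of_degree_le hh hS
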